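/- Suppose P : ℝ → GL(d,ℝ) satisfies ω₀ P'(θ) = J(θ)P(θ) - P(θ)S with S = diag(ν₁,…,ν_d), ν₁ = 0, and suppose P(θ)⁻¹ Φ'(θ) = e₁ (the first standard basis vector) for all θ, where ω₀ Φ''(θ) = J(θ)Φ'(θ). Define R(θ) := [P(θ)P(θ)ᵀ]⁻¹ Φ'(θ). Then R satisfies the adjoint equation ω₀ R'(θ) = -J(θ)ᵀ R(θ) and the normalization ⟨R(θ), Φ'(θ)⟩ = 1 for all θ. -/

import Mathlib

/-!
Because `P⁻¹ Φ' = e₁`, the vector `R = (P Pᵀ)⁻¹ Φ' = (P⁻¹)ᵀ e₁` is the first row of `Q = P⁻¹`.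
Differentiating `Q P = 1` and inserting the Floquet equation gives `ω₀ Q' = S Q - Q J`; the first
row of `S Q` vanishes since `S` is diagonal with `S₁₁ = 0`, so `ω₀ R' = -Jᵀ R`.
Finally `⟨R, Φ'⟩ = (Q Φ')₁ = 1`.
-/

open Matrix

attribute [local instance] Matrix.normedAddCommGroup Matrix.normedSpace

open Filter Topology

section

variable {𝕜 n : Type*} [NontriviallyNormedField 𝕜] [Fintype n] [DecidableEq n]

theorem HasDerivAt.matrix_inv {P : 𝕜 → Matrix n n 𝕜} {P' : Matrix n n 𝕜} {x : 𝕜}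
    (hP : HasDerivAt P P' x) (hx : IsUnit (P x).det) :
    HasDerivAt (fun a => (P a)⁻¹) (-((P x)⁻¹ * P' * (P x)⁻¹)) x := by
  have hdet : ContinuousAt (fun a => (P a).det) x :=
    continuous_id.matrix_det.continuousAt.comp hP.continuousAt
  have hinv : ContinuousAt (fun a => (P a)⁻¹) x :=
    (continuousAt_matrix_inv _ (NormedRing.inverse_continuousAt hx.unit)).comp hP.continuousAt
  have hunit : ∀ᶠ a in 𝓝[≠] x, IsUnit (P a).det := nhdsWithin_le_nhds <|
    hdet.eventually (isOpen_ne.mem_nhds hx.ne_zero) |>.mono fun _ h => h.isUnit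
  refine hasDerivAt_iff_tendsto_slope.mpr ?_
  refine ((((hinv.tendsto.mono_left nhdsWithin_le_nhds).mul hP.tendsto_slope).mul
    tendsto_const_nhds).neg).congr' ?_
  filter_upwards [hunit] with a ha
  have hdiff : (P a)⁻¹ - (P x)⁻¹ = -((P a)⁻¹ * (P a - P x) * (P x)⁻¹) := by
    rw [Matrix.mul_sub, Matrix.sub_mul, Matrix.nonsing_inv_mul _ ha, Matrix.mul_assoc,
      Matrix.mul_nonsing_inv _ hx, Matrix.mul_one, Matrix.one_mul, neg_sub]
  simp only [slope_def_module, hdiff, Matrix.mul_smul, Matrix.smul_mul, smul_neg]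

theorem HasDerivAt.matrix_inv_of_floquet {P : 𝕜 → Matrix n n 𝕜} {P' J S : Matrix n n 𝕜}
    {ω x : 𝕜} (hP : HasDerivAt P P' x) (hx : IsUnit (P x).det) (hω : ω ≠ 0)
    (hode : ω • P' = J * P x - P x * S) :
    HasDerivAt (fun a => (P a)⁻¹) (ω⁻¹ • (S * (P x)⁻¹ - (P x)⁻¹ * J)) x := by
  convert hP.matrix_inv hx using 1
  rw [inv_smul_eq_iff₀ hω, smul_neg, ← Matrix.smul_mul, ← Matrix.mul_smul, hode,
    Matrix.mul_sub, Matrix.sub_mul]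
  simp only [Matrix.mul_assoc, Matrix.mul_nonsing_inv _ hx, Matrix.mul_one,
    Matrix.nonsing_inv_mul_cancel_left _ _ hx, neg_sub]

theorem Matrix.IsDiag.mul_row_eq_zero {S : Matrix n n 𝕜} (hS : S.IsDiag) {i : n} (hi : S i i = 0)
    (Q : Matrix n n 𝕜) : (S * Q) i = 0 := by
  rw [← hS.diagonal_diag]
  ext j
  simp [hi]

theorem Matrix.mul_transpose_inv_mulVec_eq_row {P : Matrix n n 𝕜} {v : n → 𝕜} {i : n}
    (h : P⁻¹ *ᵥ v = Pi.single i 1) : (P * Pᵀ)⁻¹ *ᵥ v = P⁻¹ i := by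
  rw [Matrix.mul_inv_rev, ← Matrix.mulVec_mulVec, h, Matrix.mulVec_single_one,
    ← Matrix.transpose_nonsing_inv]
  rfl

end

theorem prc_from_floquet_satisfies_adjoint_general
    (d : ℕ) [NeZero d] (J : ℝ → Matrix (Fin d) (Fin d) ℝ)
    (P P' : ℝ → Matrix (Fin d) (Fin d) ℝ) (S : Matrix (Fin d) (Fin d) ℝ)
    (hS : S.IsDiag) (hS1 : S 0 0 = 0) (ω₀ : ℝ) (hω : 0 < ω₀)
    (hPd : ∀ θ, HasDerivAt P (P' θ) θ)
    (hPinv : ∀ θ, IsUnit (P θ).det)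
    (hPode : ∀ θ, ω₀ • P' θ = J θ * P θ - P θ * S)
    (Φd : ℝ → Fin d → ℝ)
    (hnorm : ∀ θ, (P θ)⁻¹.mulVec (Φd θ) = Pi.single 0 1) :
    ∀ θ, HasDerivAt (fun a => (P a * (P a)ᵀ)⁻¹.mulVec (Φd a))
        (ω₀⁻¹ • (-((J θ)ᵀ.mulVec ((P θ * (P θ)ᵀ)⁻¹.mulVec (Φd θ))))) θ ∧
      ((P θ * (P θ)ᵀ)⁻¹.mulVec (Φd θ)) ⬝ᵥ Φd θ = 1 := by
  intro θ
  have hR : ∀ a, (P a * (P a)ᵀ)⁻¹ *ᵥ Φd a = (P a)⁻¹ 0 := fun a =>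
    Matrix.mul_transpose_inv_mulVec_eq_row (hnorm a)
  simp only [hR]
  refine ⟨?_, congrFun (hnorm θ) 0⟩
  have hQ := (hPd θ).matrix_inv_of_floquet (hPinv θ) hω.ne' (hPode θ)
  refine (hasDerivAt_pi.mp hQ 0).congr_deriv ?_
  change ω₀⁻¹ • ((S * (P θ)⁻¹) 0 - ((P θ)⁻¹ * J θ) 0) = _
  rw [hS.mul_row_eq_zero hS1, zero_sub, Matrix.mul_apply_eq_vecMul, Matrix.mulVec_transpose]

/-- With the Floquet data `ω₀ P' = J P - P S`, `S` diagonal with first diagonal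
entry zero, `P⁻¹ Φ' = e₁`, and `ω₀ Φ'' = J Φ'`, the vector `R(θ) := [P(θ)P(θ)ᵀ]⁻¹ Φ'(θ)`
satisfies the adjoint equation `ω₀ R' = -Jᵀ R` and the normalization `⟨R(θ), Φ'(θ)⟩ = 1`. -/
theorem prc_from_floquet_satisfies_adjoint
    (d : ℕ) [NeZero d] (J : ℝ → Matrix (Fin d) (Fin d) ℝ) (hJ : Continuous J)
    (P P' : ℝ → Matrix (Fin d) (Fin d) ℝ) (S : Matrix (Fin d) (Fin d) ℝ)
    (hS : S.IsDiag) (hS1 : S 0 0 = 0) (ω₀ : ℝ) (hω : 0 < ω₀)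
    (hPd : ∀ θ, HasDerivAt P (P' θ) θ)
    (hPinv : ∀ θ, IsUnit (P θ).det)
    (hPode : ∀ θ, ω₀ • P' θ = J θ * P θ - P θ * S)
    (Φd Φdd : ℝ → Fin d → ℝ)
    (hΦd : ∀ θ, HasDerivAt Φd (Φdd θ) θ)
    (hlin : ∀ θ, ω₀ • Φdd θ = (J θ).mulVec (Φd θ))
    (hnorm : ∀ θ, (P θ)⁻¹.mulVec (Φd θ) = Pi.single 0 1) :
    ∀ θ, HasDerivAt (fun a => (P a * (P a)ᵀ)⁻¹.mulVec (Φd a))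
        (ω₀⁻¹ • (-((J θ)ᵀ.mulVec ((P θ * (P θ)ᵀ)⁻¹.mulVec (Φd θ))))) θ ∧
      ((P θ * (P θ)ᵀ)⁻¹.mulVec (Φd θ)) ⬝ᵥ Φd θ = 1 :=
  prc_from_floquet_satisfies_adjoint_general d J P P' S hS hS1 ω₀ hω hPd hPinv hPode Φd hnorm
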